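/- Let q > 0 be real and let n ≥ 0. For a strictly increasing integer sequence 0 = a_0 < a_1 < ⋯ < a_n define the q-weighted partition function W(a; q) := Σ over all t = 0 touching-path configurations with endpoints (a_0,…,a_n) of q^{Σ_e j(e)·m(e)}, where the sum in the exponent runs over the vertical edges e of the grid, j(e) is the x-coordinate of e, and m(e) is its multiplicity. Then for any two such sequences (a_0,…,a_n) and (a'_0,…,a'_n): W(a; q) · Δ(q^{a'_0}, q^{a'_1+1}, …, q^{a'_n+n}) = W(a'; q) · Δ(q^{a_0}, q^{a_1+1}, …, q^{a_n+n}), where Δ(y_0,…,y_n) = ∏_{0 ≤ i < j ≤ n}(y_j − y_i). (Equivalently, W(a; q) = q^{c_n} · Δ(q^{a_0}, q^{a_1+1}, …, q^{a_n+n}) / Δ(1, q, …, q^n) for a constant c_n independent of the a_i.) -/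

import Mathlib

open Finset

/-- A t = 0 touching-path configuration with endpoints `(a_0,…,a_n)` on the grid
`{0,…,a_n} × {−n,…,0}`: edge multiplicities satisfying conservation at every vertex,
horizontal multiplicities at most 1, multiplicity 1 on each incoming west boundary edge,
0 on the east and south boundary edges, and 1 on the outgoing north boundary edge exactly
at the columns `a_0, …, a_n`. -/
def TouchingConfig (n : ℕ) (a : Fin (n + 1) → ℕ)
    (c : (Fin (n + 1) → Fin (a (Fin.last n) + 2) → ℕ) ×
         (Fin (n + 2) → Fin (a (Fin.last n) + 1) → ℕ)) : Prop :=
  (∀ (r : Fin (n + 1)) (j : Fin (a (Fin.last n) + 1)),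
      c.1 r j.castSucc + c.2 r.castSucc j = c.1 r j.succ + c.2 r.succ j) ∧
  (∀ (r : Fin (n + 1)) (j : Fin (a (Fin.last n) + 2)), c.1 r j ≤ 1) ∧
  (∀ r : Fin (n + 1), c.1 r 0 = 1) ∧
  (∀ r : Fin (n + 1), c.1 r (Fin.last (a (Fin.last n) + 1)) = 0) ∧
  (∀ j : Fin (a (Fin.last n) + 1), c.2 0 j = 0) ∧
  (∀ j : Fin (a (Fin.last n) + 1),
      c.2 (Fin.last (n + 1)) j = if ∃ i, a i = (j : ℕ) then 1 else 0)

/-- The q-weighted partition function `W(a; q)`: the sum over all t = 0 touching-path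
configurations with endpoints `(a_0,…,a_n)` of `q^{Σ_e j(e)·m(e)}`, the sum in the
exponent running over the (interior) vertical edges `e` of the grid, `j(e)` being the
x-coordinate of the edge and `m(e)` its multiplicity. -/
noncomputable def qTouchingZ (n : ℕ) (a : Fin (n + 1) → ℕ) (q : ℝ) : ℝ :=
  ∑ᶠ c : {c : (Fin (n + 1) → Fin (a (Fin.last n) + 2) → ℕ) ×
      (Fin (n + 2) → Fin (a (Fin.last n) + 1) → ℕ) // TouchingConfig n a c},
    q ^ ∑ r : Fin n, ∑ j : Fin (a (Fin.last n) + 1),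
      (j : ℕ) * c.1.2 r.succ.castSucc j

/-!
Read the configuration row by row. The vertical multiplicities below a row form a multiset of
columns (`profile`, with sorted positions `part`), and along a row, conservation together with
the bound `1` on horizontal edges determines the horizontal edges (`rowOf`) and says precisely
that the positions below interlace with the positions above. Hence `W(a; q)` is a sum over
Gelfand–Tsetlin patterns with top row `a`, and the rows can be summed out one at a time with the
branching rule `∑_{ν ≺ μ} q^{|ν|} Δ(q^{ν_i+i}) · ∏_{i<m} q^i (q^{i+1} - 1) = Δ(q^{μ_i+i})`.
That rule is multilinearity of the determinant in its rows: summing the rows of the Vandermonde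
matrix over the interlacing range gives geometric sums, which after scaling become differences
of consecutive rows of the Vandermonde matrix of `q^{μ_i+i}`. So `W(a; q)` times a constant
depending only on `n` equals `Δ(q^{a_0}, …, q^{a_n+n})`.
-/

open Matrix

namespace TouchingPaths

section Vandermonde

variable {R : Type*} [CommRing R]

theorem det_vandermonde_eq_det_pow_succ_sub {m : ℕ} (y : Fin (m + 1) → R) :
    det (vandermonde y) =
      det (of fun i j : Fin m => y i.succ ^ ((j : ℕ) + 1) - y i.castSucc ^ ((j : ℕ) + 1)) := by
  let B : Matrix (Fin (m + 1)) (Fin (m + 1)) R := of fun i j =>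
    Fin.cases (y 0 ^ (j : ℕ)) (fun k => y k.succ ^ (j : ℕ) - y k.castSucc ^ (j : ℕ)) i
  rw [det_eq_of_forall_row_eq_smul_add_pred (A := vandermonde y) (B := B) (fun _ => 1)
    (fun _ => rfl) (fun i j => by simp [B]), det_succ_column_zero, Fin.sum_univ_succ]
  simp [B, submatrix]

theorem prod_filter_lt_sub_eq_det_vandermonde {m : ℕ} (v : Fin m → R) :
    ∏ p ∈ univ.filter (fun p : Fin m × Fin m => p.1 < p.2), (v p.2 - v p.1) =
      det (vandermonde v) := by
  simp only [det_vandermonde, prod_filter, Fintype.prod_prod_type]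
  refine prod_congr rfl fun i _ => ?_
  rw [← Finset.filter_lt_eq_Ioi, prod_filter]

-- The factor produced by scaling row `i` by `q ^ i` and column `i` by `q ^ (i + 1) - 1`.
def branchingFactor (q : R) (m : ℕ) : R :=
  ∏ i : Fin m, q ^ (i : ℕ) * (q ^ ((i : ℕ) + 1) - 1)

theorem scaled_geom_sum_Icc (q : R) {a b : ℕ} (hab : a ≤ b + 1) (i j : ℕ) :
    q ^ i * ((q ^ (j + 1) - 1) * ∑ x ∈ Icc a b, q ^ x * (q ^ (x + i)) ^ j) =
      (q ^ (b + 1 + i)) ^ (j + 1) - (q ^ (a + i)) ^ (j + 1) := by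
  have hsum : ∑ x ∈ Icc a b, q ^ x * (q ^ (x + i)) ^ j =
      q ^ (i * j) * ∑ x ∈ Ico a (b + 1), (q ^ (j + 1)) ^ x := by
    rw [Finset.Ico_add_one_right_eq_Icc, mul_sum]
    exact sum_congr rfl fun x _ => by ring
  rw [hsum]
  linear_combination (q ^ i * q ^ (i * j)) * geom_sum_Ico_mul (q ^ (j + 1)) hab

theorem sum_interlacing_det_vandermonde (q : R) {m : ℕ} (μ : Fin (m + 1) → ℕ)
    (hμ : Monotone μ) :
    (∑ ν ∈ Fintype.piFinset fun i : Fin m => Icc (μ i.castSucc) (μ i.succ),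
        q ^ (∑ i, ν i) * det (vandermonde fun i => q ^ (ν i + (i : ℕ)))) * branchingFactor q m
      = det (vandermonde fun i => q ^ (μ i + (i : ℕ))) := by
  set A := fun i : Fin m => Icc (μ i.castSucc) (μ i.succ)
  set g : Fin m → ℕ → Fin m → R := fun i x j => q ^ x * (q ^ (x + (i : ℕ))) ^ (j : ℕ)
  have hweight (ν : Fin m → ℕ) :
      q ^ (∑ i, ν i) * det (vandermonde fun i => q ^ (ν i + (i : ℕ))) =
        det (of fun i j => g i (ν i) j) := by
    rw [← prod_pow_eq_pow_sum, ← det_mul_column]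
    rfl
  have hmultilinear : ∑ ν ∈ Fintype.piFinset A, det (of fun i j => g i (ν i) j) =
      det (of fun i j => ∑ x ∈ A i, g i x j) := by
    have hrows : (of fun i j => ∑ x ∈ A i, g i x j) = fun i => ∑ x ∈ A i, g i x := by
      ext i j
      simp [Finset.sum_apply]
    rw [hrows]
    exact ((detRowAlternating (n := Fin m) (R := R)).map_sum_finset g A).symm
  have hscale : det (of fun i j => ∑ x ∈ A i, g i x j) * branchingFactor q m =
      det (of fun i j : Fin m =>
        q ^ (i : ℕ) * ((q ^ ((j : ℕ) + 1) - 1) * ∑ x ∈ A i, g i x j)) := by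
    rw [branchingFactor, prod_mul_distrib, mul_comm, mul_assoc, ← det_mul_row, ← det_mul_column]
    rfl
  rw [sum_congr rfl fun ν _ => hweight ν, hmultilinear, hscale,
    det_vandermonde_eq_det_pow_succ_sub]
  congr 1
  ext i j
  simp only [g, A, of_apply, Fin.val_succ, Fin.val_castSucc]
  rw [scaled_geom_sum_Icc q ((hμ Fin.castSucc_lt_succ.le).trans (Nat.le_succ _))]
  ring

end Vandermonde

section Profile

variable {M : ℕ}

def countBelow (u : Fin (M + 1) → ℕ) (t : ℕ) : ℕ :=
  ∑ k ∈ univ.filter (fun k : Fin (M + 1) => (k : ℕ) < t), u k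

theorem countBelow_zero (u : Fin (M + 1) → ℕ) : countBelow u 0 = 0 := by
  simp [countBelow]

theorem countBelow_succ (u : Fin (M + 1) → ℕ) (j : Fin (M + 1)) :
    countBelow u (j + 1) = countBelow u j + u j := by
  have hinsert : univ.filter (fun k : Fin (M + 1) => (k : ℕ) < j + 1) =
      insert j (univ.filter fun k : Fin (M + 1) => (k : ℕ) < j) := by
    ext k
    simp only [mem_filter, mem_univ, true_and, mem_insert, Fin.ext_iff]
    omega
  rw [countBelow, countBelow, hinsert, sum_insert (by simp), add_comm]

theorem countBelow_mono (u : Fin (M + 1) → ℕ) : Monotone (countBelow u) :=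
  fun _ _ hst => sum_le_sum_of_subset (monotone_filter_right _ fun _ _ h => h.trans_le hst)

theorem countBelow_of_le (u : Fin (M + 1) → ℕ) {t : ℕ} (ht : M + 1 ≤ t) :
    countBelow u t = ∑ k, u k := by
  rw [countBelow, filter_true_of_mem fun k _ => k.isLt.trans_le ht]

theorem le_countBelow (u : Fin (M + 1) → ℕ) (j : Fin (M + 1)) :
    u j ≤ countBelow u (M + 1) := by
  rw [countBelow_of_le u le_rfl]
  exact single_le_sum (fun _ _ => Nat.zero_le _) (mem_univ j)

theorem countBelow_min_succ (u : Fin (M + 1) → ℕ) (t : ℕ) :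
    countBelow u (min t (M + 1)) = countBelow u t := by
  rcases le_total t (M + 1) with ht | ht
  · rw [min_eq_left ht]
  · rw [min_eq_right ht, countBelow_of_le u le_rfl, countBelow_of_le u ht]

-- The `i`-th smallest element (counting from `0`) of the multiset with multiplicities `u`.
def part (u : Fin (M + 1) → ℕ) (i : ℕ) : ℕ :=
  (univ.filter fun j : Fin (M + 1) => countBelow u (j + 1) ≤ i).card

theorem le_part_iff (u : Fin (M + 1) → ℕ) (i : ℕ) {j : ℕ} (hj : j ≤ M + 1) :
    j ≤ part u i ↔ countBelow u j ≤ i := by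
  rcases j with _ | k
  · simp [countBelow_zero]
  · exact Fin.lt_card_filter_univ_iff_apply_of_imp (j := ⟨k, hj⟩) _
      fun _ _ hle h => (countBelow_mono u (by simpa using hle)).trans h

theorem part_mono (u : Fin (M + 1) → ℕ) : Monotone (part u) :=
  fun _ _ hii' => card_le_card (monotone_filter_right _ fun _ _ h => h.trans hii')

theorem part_le (u : Fin (M + 1) → ℕ) {i : ℕ} (hi : i < countBelow u (M + 1)) :
    part u i ≤ M := by
  by_contra! h
  exact (le_part_iff u i le_rfl).not.mpr (by omega) h

theorem part_eq_iff (u : Fin (M + 1) → ℕ) (i : ℕ) (j : Fin (M + 1)) :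
    part u i = j ↔ countBelow u j ≤ i ∧ i < countBelow u (j + 1) := by
  rw [← le_part_iff u i j.isLt.le, ← not_le, ← le_part_iff u i (by omega)]
  omega

def profile {m : ℕ} (ν : Fin m → ℕ) : Fin (M + 1) → ℕ :=
  fun j => (univ.filter fun i => ν i = j).card

variable {m : ℕ} {ν : Fin m → ℕ}

theorem sum_mul_profile (hν : ∀ i, ν i ≤ M) (f : ℕ → ℕ) :
    ∑ j : Fin (M + 1), f j * profile ν j = ∑ i, f (ν i) := by
  simp only [profile, card_filter, mul_sum, mul_ite, mul_one, mul_zero]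
  rw [sum_comm]
  refine sum_congr rfl fun i _ => ?_
  rw [Fintype.sum_eq_single ⟨ν i, Nat.lt_succ_of_le (hν i)⟩
    fun j hj => if_neg fun h => hj (Fin.ext h.symm)]
  simp

theorem countBelow_profile (hν : ∀ i, ν i ≤ M) (t : ℕ) :
    countBelow (profile ν : Fin (M + 1) → ℕ) t = (univ.filter fun i => ν i < t).card := by
  rw [countBelow, sum_filter, card_filter, ← sum_mul_profile hν fun j => if j < t then 1 else 0]
  simp only [ite_mul, one_mul, zero_mul]

theorem part_profile (hmono : Monotone ν) (hν : ∀ i, ν i ≤ M) (i : Fin m) :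
    part (profile ν : Fin (M + 1) → ℕ) i = ν i := by
  have hiff (j : Fin (M + 1)) :
      countBelow (profile ν : Fin (M + 1) → ℕ) (j + 1) ≤ i ↔ (j : ℕ) < ν i := by
    rw [countBelow_profile hν, ← not_lt,
      Fin.lt_card_filter_univ_iff_apply_of_imp _ fun _ _ hle h => (hmono hle).trans_lt h]
    omega
  rw [part, filter_congr fun j _ => hiff j, Fin.card_filter_val_lt]
  have := hν i
  omega

theorem profile_part {u : Fin (M + 1) → ℕ} (hu : countBelow u (M + 1) = m) (j : Fin (M + 1)) :
    profile (fun i : Fin m => part u i) j = u j := by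
  have hIco : (univ.filter fun i : Fin m => part u i = j) =
      (univ.filter fun i : Fin m => (i : ℕ) < countBelow u (j + 1)) \
        (univ.filter fun i : Fin m => (i : ℕ) < countBelow u j) := by
    ext i
    simp only [mem_filter, mem_sdiff, mem_univ, true_and, part_eq_iff]
    omega
  have hmono : countBelow u j ≤ countBelow u (j + 1) := countBelow_mono u (Nat.le_succ _)
  have hle : countBelow u (j + 1) ≤ m := hu ▸ countBelow_mono u (by omega)
  rw [profile, hIco, card_sdiff_of_subset (monotone_filter_right _ fun _ _ h => h.trans_le hmono),
    Fin.card_filter_val_lt, Fin.card_filter_val_lt, min_eq_right hle,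
    min_eq_right (hmono.trans hle), countBelow_succ]
  omega

theorem profile_of_injective (hν : Function.Injective ν) :
    (profile ν : Fin (M + 1) → ℕ) =
      fun j : Fin (M + 1) => if ∃ i, ν i = (j : ℕ) then 1 else 0 := by
  funext j
  split_ifs with h
  · obtain ⟨i, hi⟩ := h
    refine card_eq_one.mpr ⟨i, eq_singleton_iff_unique_mem.mpr ⟨by simpa using hi, ?_⟩⟩
    exact fun i' hi' => hν ((mem_filter.mp hi').2.trans hi.symm)
  · exact card_eq_zero.mpr (filter_eq_empty_iff.mpr fun i _ hi => h ⟨i, hi⟩)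

theorem countBelow_eq_card_part {u : Fin (M + 1) → ℕ} (hu : countBelow u (M + 1) = m)
    (t : ℕ) : countBelow u t = (univ.filter fun i : Fin m => part u i < t).card := by
  rw [← countBelow_profile fun i => part_le u (hu ▸ i.isLt), funext (profile_part hu)]

end Profile

section Interlacing

variable {M : ℕ}

structure Interlaces (w u : Fin (M + 1) → ℕ) : Prop where
  countBelow_le : ∀ t, countBelow w t ≤ countBelow u t
  countBelow_le_succ : ∀ t, countBelow u t ≤ countBelow w t + 1
  total : countBelow u (M + 1) = countBelow w (M + 1) + 1

variable {w u : Fin (M + 1) → ℕ} {m : ℕ}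

theorem Interlaces.part_le (h : Interlaces w u) (i : ℕ) : part u i ≤ part w i :=
  card_le_card (monotone_filter_right _ fun j _ hj => (h.countBelow_le (j + 1)).trans hj)

theorem Interlaces.le_part_succ (h : Interlaces w u) (i : ℕ) : part w i ≤ part u (i + 1) :=
  card_le_card (monotone_filter_right _ fun j _ hj =>
    (h.countBelow_le_succ (j + 1)).trans (Nat.succ_le_succ hj))

theorem interlaces_profile (hu : countBelow u (M + 1) = m + 1) {ν : Fin m → ℕ}
    (hν : ∀ i : Fin m, part u i ≤ ν i ∧ ν i ≤ part u (i + 1)) :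
    Interlaces (profile ν) u := by
  have hνM (i : Fin m) : ν i ≤ M := (hν i).2.trans (part_le u (by omega))
  refine ⟨fun t => ?_, fun t => ?_, ?_⟩
  · rw [countBelow_profile hνM, countBelow_eq_card_part hu]
    exact card_le_card_of_injOn Fin.castSucc
      (fun i hi => by simpa using (hν i).1.trans_lt (by simpa using hi))
      (Fin.castSucc_injective m).injOn
  · rw [countBelow_profile hνM, countBelow_eq_card_part hu, Fin.card_filter_univ_succ']
    have : (univ.filter fun i : Fin m => part u (i + 1) < t).card ≤
        (univ.filter fun i : Fin m => ν i < t).card :=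
      card_le_card (monotone_filter_right _ fun i _ hi => (hν i).2.trans_lt hi)
    split_ifs <;> simp only [Fin.val_succ] <;> omega
  · rw [hu, countBelow_profile hνM, filter_true_of_mem fun i _ => Nat.lt_succ_of_le (hνM i)]
    simp

open scoped Classical in
noncomputable def lowerProfiles (m : ℕ) (u : Fin (M + 1) → ℕ) :
    Finset (Fin (M + 1) → ℕ) :=
  (Fintype.piFinset fun _ => range (m + 1)).filter (Interlaces · u)

theorem mem_lowerProfiles (hu : countBelow u (M + 1) = m + 1) :
    w ∈ lowerProfiles m u ↔ Interlaces w u := by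
  classical
  simp only [lowerProfiles, mem_filter, Fintype.mem_piFinset, mem_range, Nat.lt_succ_iff,
    and_iff_right_iff_imp]
  exact fun h j => (le_countBelow w j).trans (by have := h.total; omega)

theorem sum_lowerProfiles {β : Type*} [AddCommMonoid β] (hu : countBelow u (M + 1) = m + 1)
    (f : (Fin m → ℕ) → β) :
    ∑ w ∈ lowerProfiles m u, f (fun i => part w i) =
      ∑ ν ∈ Fintype.piFinset fun i : Fin m => Icc (part u i) (part u (i + 1)), f ν := by
  refine sum_nbij' (fun w i => part w i) profile (fun w hw => ?_) (fun ν hν => ?_)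
    (fun w hw => ?_) (fun ν hν => ?_) (fun _ _ => rfl)
  · have h := (mem_lowerProfiles hu).mp hw
    simpa [Fintype.mem_piFinset] using fun i : Fin m => ⟨h.part_le i, h.le_part_succ i⟩
  · simp only [Fintype.mem_piFinset, mem_Icc] at hν
    exact (mem_lowerProfiles hu).mpr (interlaces_profile hu hν)
  · have h := (mem_lowerProfiles hu).mp hw
    exact funext (profile_part (by have := h.total; omega))
  · simp only [Fintype.mem_piFinset, mem_Icc] at hν
    have hmono : Monotone ν := fun i i' hii' => by
      rcases hii'.eq_or_lt with rfl | hlt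
      · exact le_rfl
      · exact (hν i).2.trans ((part_mono u (Fin.lt_def.mp hlt)).trans (hν i').1)
    exact funext (part_profile hmono fun i => (hν i).2.trans (part_le u (by omega)))

end Interlacing

section Rows

variable {M : ℕ} {w u : Fin (M + 1) → ℕ} {h : Fin (M + 2) → ℕ}

structure IsRow (w u : Fin (M + 1) → ℕ) (h : Fin (M + 2) → ℕ) : Prop where
  conserve : ∀ j, h j.castSucc + w j = h j.succ + u j
  le_one : ∀ j, h j ≤ 1
  west : h 0 = 1
  east : h (Fin.last _) = 0

def rowOf (w u : Fin (M + 1) → ℕ) (j : Fin (M + 2)) : ℕ := 1 + countBelow w j - countBelow u j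

theorem IsRow.add_countBelow (hr : IsRow w u h) (j : Fin (M + 2)) :
    h j + countBelow u j = 1 + countBelow w j := by
  induction j using Fin.induction with
  | zero => simp [hr.west, countBelow_zero]
  | succ j ih =>
    have := hr.conserve j
    rw [Fin.val_succ, countBelow_succ, countBelow_succ]
    rw [Fin.val_castSucc] at ih
    omega

theorem IsRow.interlaces (hr : IsRow w u h) : Interlaces w u := by
  have hmin (t : ℕ) := hr.add_countBelow ⟨min t (M + 1), by omega⟩
  have hle (t : ℕ) := hr.le_one ⟨min t (M + 1), by omega⟩
  simp only [countBelow_min_succ] at hmin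
  refine ⟨fun t => ?_, fun t => ?_, ?_⟩
  · have := hmin t; have := hle t; omega
  · have := hmin t; omega
  · have := hr.add_countBelow (Fin.last _)
    rw [hr.east, Fin.val_last] at this
    omega

theorem IsRow.eq_rowOf (hr : IsRow w u h) : h = rowOf w u :=
  funext fun j => by have := hr.add_countBelow j; unfold rowOf; omega

theorem Interlaces.isRow_rowOf (hi : Interlaces w u) : IsRow w u (rowOf w u) where
  conserve j := by
    have := hi.countBelow_le j; have := hi.countBelow_le_succ j
    have := hi.countBelow_le (j + 1); have := hi.countBelow_le_succ (j + 1)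
    simp only [rowOf, Fin.val_castSucc, Fin.val_succ, countBelow_succ] at *
    omega
  le_one j := by have := hi.countBelow_le j; unfold rowOf; omega
  west := by simp [rowOf, countBelow_zero]
  east := by have := hi.total; simp only [rowOf, Fin.val_last]; omega

end Rows

section Configurations

variable {M m : ℕ} {u : Fin (M + 1) → ℕ}

abbrev Config (M m : ℕ) : Type :=
  (Fin m → Fin (M + 2) → ℕ) × (Fin (m + 1) → Fin (M + 1) → ℕ)

-- The encoding of `TouchingConfig` with `m` rows and north boundary `u`: `c.1 r j` enters
-- column `j` of row `r` from the west, `c.2 r j` enters it from the south.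
structure IsConfig (u : Fin (M + 1) → ℕ) (c : Config M m) : Prop where
  row : ∀ r, IsRow (c.2 r.castSucc) (c.2 r.succ) (c.1 r)
  south : c.2 0 = 0
  north : c.2 (Fin.last m) = u

def rowWeight (w : Fin (M + 1) → ℕ) : ℕ := ∑ j : Fin (M + 1), (j : ℕ) * w j

def configWeight (c : Config M m) : ℕ := ∑ r : Fin m, rowWeight (c.2 r.castSucc)

theorem IsConfig.countBelow_eq {c : Config M m} (hc : IsConfig u c) (r : Fin (m + 1)) :
    countBelow (c.2 r) (M + 1) = r := by
  induction r using Fin.induction with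
  | zero => simp [hc.south, countBelow_of_le]
  | succ r ih => rw [(hc.row r).interlaces.total, ih]; rfl

open scoped Classical in
noncomputable def configs (m : ℕ) (u : Fin (M + 1) → ℕ) : Finset (Config M m) :=
  ((Fintype.piFinset fun _ => Fintype.piFinset fun _ => range 2) ×ˢ
    (Fintype.piFinset fun _ => Fintype.piFinset fun _ => range (m + 1))).filter (IsConfig u)

theorem mem_configs {c : Config M m} : c ∈ configs m u ↔ IsConfig u c := by
  classical
  simp only [configs, mem_filter, mem_product, Fintype.mem_piFinset, mem_range,
    and_iff_right_iff_imp]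
  refine fun hc => ⟨fun r j => Nat.lt_succ_of_le ((hc.row r).le_one j), fun r j => ?_⟩
  have := (le_countBelow (c.2 r) j).trans_eq (hc.countBelow_eq r)
  omega

noncomputable def partitionFn {R : Type*} [CommRing R] (q : R) (m : ℕ)
    (u : Fin (M + 1) → ℕ) : R :=
  ∑ c ∈ configs m u, q ^ configWeight c

theorem IsConfig.init {c : Config M (m + 1)} (hc : IsConfig u c) :
    IsConfig (c.2 (Fin.last m).castSucc) (Fin.init c.1, Fin.init c.2) where
  row r := by
    have h := hc.row r.castSucc
    rw [Fin.succ_castSucc] at h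
    exact h
  south := hc.south
  north := rfl

theorem IsConfig.snoc {w : Fin (M + 1) → ℕ} {c : Config M m} (hc : IsConfig w c)
    (hi : Interlaces w u) : IsConfig u (Fin.snoc c.1 (rowOf w u), Fin.snoc c.2 u) where
  row r := by
    induction r using Fin.lastCases with
    | last =>
      simp only [Fin.snoc_last, Fin.succ_last, Fin.snoc_castSucc, hc.north]
      exact hi.isRow_rowOf
    | cast r =>
      simp only [Fin.succ_castSucc, Fin.snoc_castSucc]
      exact hc.row r
  south := by
    change Fin.snoc (α := fun _ => Fin (M + 1) → ℕ) c.2 u (Fin.castSucc 0) = 0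
    rw [Fin.snoc_castSucc, hc.south]
  north := by simp

theorem configWeight_succ (c : Config M (m + 1)) :
    configWeight c =
      configWeight (Fin.init c.1, Fin.init c.2) + rowWeight (c.2 (Fin.last m).castSucc) :=
  Fin.sum_univ_castSucc _

variable {R : Type*} [CommRing R]

theorem partitionFn_succ (q : R) (hu : countBelow u (M + 1) = m + 1) :
    partitionFn q (m + 1) u = ∑ w ∈ lowerProfiles m u, q ^ rowWeight w * partitionFn q m w := by
  simp only [partitionFn, mul_sum, ← pow_add]
  rw [← sum_sigma (lowerProfiles m u) (fun w => configs m w)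
    (fun p => q ^ (rowWeight p.1 + configWeight p.2))]
  refine sum_nbij' (fun c => ⟨c.2 (Fin.last m).castSucc, (Fin.init c.1, Fin.init c.2)⟩)
    (fun p => (Fin.snoc p.2.1 (rowOf p.1 u), Fin.snoc p.2.2 u))
    (fun c hc => ?_) (fun p hp => ?_) (fun c hc => ?_) (fun p hp => ?_) (fun c hc => ?_)
  · have hc := mem_configs.mp hc
    have hlast := (hc.row (Fin.last m)).interlaces
    rw [Fin.succ_last, hc.north] at hlast
    simp only [mem_sigma, mem_lowerProfiles hu, mem_configs]
    exact ⟨hlast, hc.init⟩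
  · simp only [mem_sigma, mem_lowerProfiles hu, mem_configs] at hp
    exact mem_configs.mpr (hp.2.snoc hp.1)
  · have hc := mem_configs.mp hc
    have hrow := (hc.row (Fin.last m)).eq_rowOf
    rw [Fin.succ_last, hc.north] at hrow
    dsimp only
    rw [← hrow, Fin.snoc_init_self, ← hc.north, Fin.snoc_init_self]
  · simp only [mem_sigma, mem_configs] at hp
    simp only [Fin.snoc_castSucc, Fin.init_snoc, hp.2.north]
  · rw [configWeight_succ, add_comm]

theorem partitionFn_zero (q : R) (hu : countBelow u (M + 1) = 0) : partitionFn q 0 u = 1 := by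
  have hu0 : u = 0 := funext fun j => by have := le_countBelow u j; rw [Pi.zero_apply]; omega
  have hconfigs : configs 0 u = {(fun r => r.elim0, fun _ => u)} := by
    refine eq_singleton_iff_unique_mem.mpr ⟨mem_configs.mpr ⟨fun r => r.elim0, hu0, rfl⟩,
      fun c hc => ?_⟩
    exact Prod.ext (funext fun r => r.elim0)
      (funext fun r => Fin.fin_one_eq_zero r ▸ (mem_configs.mp hc).north)
  simp [partitionFn, hconfigs, configWeight]

theorem rowWeight_eq_sum_part {w : Fin (M + 1) → ℕ} (hw : countBelow w (M + 1) = m) :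
    rowWeight w = ∑ i : Fin m, part w i := by
  conv_lhs => rw [← funext (profile_part hw)]
  exact sum_mul_profile (fun i => part_le w (hw ▸ i.isLt)) id

theorem partitionFn_mul_prod_branchingFactor (q : R) (hu : countBelow u (M + 1) = m) :
    partitionFn q m u * ∏ k ∈ range m, branchingFactor q k =
      det (vandermonde fun i : Fin m => q ^ (part u i + (i : ℕ))) := by
  induction m generalizing u with
  | zero => simp [partitionFn_zero q hu]
  | succ m ih =>
    have hsummand (w : Fin (M + 1) → ℕ) (hw : w ∈ lowerProfiles m u) :
        q ^ rowWeight w * partitionFn q m w * ∏ k ∈ range m, branchingFactor q k =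
          q ^ (∑ i : Fin m, part w i) *
            det (vandermonde fun i : Fin m => q ^ (part w i + (i : ℕ))) := by
      have hw : countBelow w (M + 1) = m := by
        have := ((mem_lowerProfiles hu).mp hw).total
        omega
      rw [mul_assoc, ih hw, rowWeight_eq_sum_part hw]
    rw [partitionFn_succ q hu, prod_range_succ, ← mul_assoc, sum_mul, sum_congr rfl hsummand,
      sum_lowerProfiles hu fun ν =>
        q ^ (∑ i, ν i) * det (vandermonde fun i => q ^ (ν i + (i : ℕ)))]
    exact sum_interlacing_det_vandermonde q (fun i : Fin (m + 1) => part u i)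
      fun _ _ h => part_mono u h

end Configurations

end TouchingPaths

open TouchingPaths

section TouchingConfigurations

variable {n : ℕ} {a : Fin (n + 1) → ℕ}

theorem touchingConfig_iff {c : Config (a (Fin.last n)) (n + 1)} :
    TouchingConfig n a c ↔ IsConfig (fun j => if ∃ i, a i = (j : ℕ) then 1 else 0) c := by
  constructor
  · rintro ⟨hcons, hle, hwest, heast, hsouth, hnorth⟩
    exact ⟨fun r => ⟨hcons r, hle r, hwest r, heast r⟩, funext hsouth, funext hnorth⟩
  · rintro ⟨hrow, hsouth, hnorth⟩
    exact ⟨fun r => (hrow r).conserve, fun r => (hrow r).le_one, fun r => (hrow r).west,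
      fun r => (hrow r).east, congrFun hsouth, congrFun hnorth⟩

theorem qTouchingZ_eq_partitionFn (q : ℝ) :
    qTouchingZ n a q = partitionFn q (n + 1)
      fun j : Fin (a (Fin.last n) + 1) => if ∃ i, a i = (j : ℕ) then 1 else 0 := by
  rw [qTouchingZ, finsum_subtype_eq_finsum_cond (f := fun c : Config (a (Fin.last n)) (n + 1) =>
      q ^ ∑ r : Fin n, ∑ j : Fin (a (Fin.last n) + 1), (j : ℕ) * c.2 r.succ.castSucc j) _,
    finsum_cond_eq_sum_of_cond_iff _ fun {_} _ => by rw [mem_configs, touchingConfig_iff]]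
  refine sum_congr rfl fun c hc => ?_
  rw [configWeight, Fin.sum_univ_succ, Fin.castSucc_zero, (mem_configs.mp hc).south]
  simp [rowWeight]

theorem qTouchingZ_mul_prod_branchingFactor (q : ℝ) (ha : StrictMono a) :
    qTouchingZ n a q * ∏ k ∈ range (n + 1), branchingFactor q k =
      det (vandermonde fun i => q ^ (a i + (i : ℕ))) := by
  have haM (i : Fin (n + 1)) : a i ≤ a (Fin.last n) := ha.monotone (Fin.le_last i)
  have htotal :
      countBelow (profile a : Fin (a (Fin.last n) + 1) → ℕ) (a (Fin.last n) + 1) = n + 1 := by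
    rw [countBelow_profile haM, filter_true_of_mem fun i _ => Nat.lt_succ_of_le (haM i)]
    simp
  rw [qTouchingZ_eq_partitionFn, ← profile_of_injective ha.injective,
    partitionFn_mul_prod_branchingFactor q htotal]
  simp only [part_profile ha.monotone haM]

end TouchingConfigurations

theorem qTouchingZ_vandermonde_ratio (q : ℝ) (n : ℕ)
    (a a' : Fin (n + 1) → ℕ) (hmono : StrictMono a)
    (hmono' : StrictMono a') :
    qTouchingZ n a q *
      (∏ p ∈ Finset.univ.filter (fun p : Fin (n + 1) × Fin (n + 1) => p.1 < p.2),
        (q ^ (a' p.2 + (p.2 : ℕ)) - q ^ (a' p.1 + (p.1 : ℕ)))) =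
    qTouchingZ n a' q *
      (∏ p ∈ Finset.univ.filter (fun p : Fin (n + 1) × Fin (n + 1) => p.1 < p.2),
        (q ^ (a p.2 + (p.2 : ℕ)) - q ^ (a p.1 + (p.1 : ℕ)))) := by
  rw [prod_filter_lt_sub_eq_det_vandermonde fun i => q ^ (a' i + (i : ℕ)),
    prod_filter_lt_sub_eq_det_vandermonde fun i => q ^ (a i + (i : ℕ)),
    ← qTouchingZ_mul_prod_branchingFactor q hmono,
    ← qTouchingZ_mul_prod_branchingFactor q hmono']
  ring
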